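/- Fix reals α, β with 0 ≤ α < 1 and β > 1. Let w be a word in the language 𝓛 of Σ and let c ∈ {0,…,ℓ}. Then the word wc obtained by appending the letter c to w belongs to 𝓛 if and only if a_{k₁(w)+1} ≤ c ≤ b_{k₂(w)+1}. -/

import Mathlib

noncomputable section

namespace IntermediateBeta

/-- The intermediate beta transformation `x ↦ βx + α mod 1`. -/
def F (α β : ℝ) (x : ℝ) : ℝ := Int.fract (β * x + α)

/-- The digit sequence of a point: `Om α β x n` is the index `i` with `F^[n] x ∈ J_i`.
For `y ∈ [0,1)` we have `y ∈ J_i ↔ ⌊β y + α⌋ = i`. -/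
def Om (α β : ℝ) (x : ℝ) : ℕ → ℕ := fun n => (⌊β * ((F α β)^[n] x) + α⌋).toNat

/-- `ℓ = ⌈α + β⌉ - 1`. -/
def ell (α β : ℝ) : ℕ := ⌈α + β⌉₊ - 1

/-- The subshift `Σ`: closure (in the product topology) of the set of digit sequences
of points of `[0,1)`. -/
def Sig (α β : ℝ) : Set (ℕ → ℕ) := closure (Om α β '' Set.Ico (0 : ℝ) 1)

/-- The shift map. -/
def shift (x : ℕ → ℕ) : ℕ → ℕ := fun n => x (n + 1)

/-- Lexicographic order on one-sided sequences. -/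
def lexLe (x y : ℕ → ℕ) : Prop := x = y ∨ ∃ k, (∀ i < k, x i = y i) ∧ x k < y k

/-- The language of a subset `S` of the full shift: the finite words occurring as
initial segments of elements of `S`. -/
def langOf (S : Set (ℕ → ℕ)) (w : List ℕ) : Prop :=
  ∃ x ∈ S, ∀ i : Fin w.length, x i = w.get i

/-- Membership in the language `𝓛` of the subshift `Σ`. -/
def inLang (α β : ℝ) (w : List ℕ) : Prop := langOf (Sig α β) w

/-- The tail segment of `w` of length `k` agrees with the initial segment of `s`
of length `k`. -/
def tailAgrees (s : ℕ → ℕ) (w : List ℕ) (k : ℕ) : Prop :=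
  k ≤ w.length ∧ ∀ i < k, w.getD (w.length - k + i) 0 = s i

/-- `kmax s w` is the length of the longest tail segment of `w` agreeing with an
initial segment of `s` (`k₁(w)` when `s = a`, `k₂(w)` when `s = b`). -/
def kmax (s : ℕ → ℕ) (w : List ℕ) : ℕ := sSup {k | tailAgrees s w k}

/-- `D a b` is the set of lengths `n` such that the initial segment of `b` of
length `n` occurs somewhere in `a`.  Thus `D a b` is the set `𝖣(a)` of the paper
and `D b a` is `𝖣(b)`. -/
def D (a b : ℕ → ℕ) : Set ℕ := {n | ∃ j, ∀ i < n, b i = a (j + i)}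

/-- Gluing of the words `w 0, v 0, w 1, v 1, …, v (n-1), w n`. -/
def glue {n : ℕ} (w : Fin (n + 1) → List ℕ) (v : Fin n → List ℕ) : List ℕ :=
  (List.ofFn fun i : Fin n => w i.castSucc ++ v i).flatten ++ w (Fin.last n)

/-- A collection `G` of words inside the language `lang` has specification: there
is `τ ∈ ℕ` such that any finite list of words of `G` can be glued, with gluing
words from `lang` of length `τ`, into a word of `lang`. -/
def HasSpec (lang G : List ℕ → Prop) : Prop :=
  ∃ τ : ℕ, 1 ≤ τ ∧ ∀ n : ℕ, ∀ w : Fin (n + 1) → List ℕ, (∀ i, G (w i)) →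
    ∃ v : Fin n → List ℕ, (∀ i, (v i).length = τ ∧ lang (v i)) ∧ lang (glue w v)

/-- The initial segment of a sequence, as a finite word. -/
def pre (s : ℕ → ℕ) (n : ℕ) : List ℕ := List.ofFn fun i : Fin n => s i

/-- Lexicographic order for finite words (of equal length). -/
def wordLe (u v : List ℕ) : Prop :=
  u = v ∨ ∃ k, (∀ i < k, u.getD i 0 = v.getD i 0) ∧ u.getD k 0 < v.getD k 0

/-- Concatenation of a finite word with an infinite sequence. -/
def wcat (w : List ℕ) (x : ℕ → ℕ) : ℕ → ℕ := fun n =>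
  if h : n < w.length then w.get ⟨n, h⟩ else x (n - w.length)

/-!
The points of `[0,1)` whose itinerary begins with a word `w` are mapped by `F^|w|` onto an
interval `[s(w), t(w))` (`lowerEnd`, `upperEnd`), where `s(∅) = 0`, `t(∅) = 1` and
`s(wd) = max(βs(w) + α - d, 0)`, `t(wd) = min(βt(w) + α - d, 1)`. Hence `w ∈ 𝓛` iff
`s(w) < t(w)`, and `wc ∈ 𝓛` iff `βs(w) + α - c < 1` and `0 < βt(w) + α - c`.

The lower endpoint is `s(w) = F^{k₁(w)}(0)`: when the next letter is `a_{k₁+1}` both sides move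
one step along the orbit of `0`, and otherwise `s` drops to `0` while `k₁` drops to `0` because
`a = Ω(0)` is lexicographically below all of its shifts. Symmetrically `t(w) = T^{k₂(w)}(1)`, where
`T` is the left-continuous version of `F` and `b` is the itinerary of `1` under `T`, which lies
above all of its shifts. The two inequalities then read `a_{k₁+1} ≤ c` and `c ≤ b_{k₂+1}`.
-/

section Digits

variable {α β : ℝ}

def branch (α β : ℝ) (d : ℕ) (y : ℝ) : ℝ := β * y + (α - d)

def floorDigit (α β : ℝ) (y : ℝ) : ℕ := ⌊β * y + α⌋₊

def ceilDigit (α β : ℝ) (y : ℝ) : ℕ := ⌈β * y + α⌉₊ - 1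

/-- The left-continuous version of `F`, acting on `(0,1]`. -/
def T (α β : ℝ) (y : ℝ) : ℝ := branch α β (ceilDigit α β y) y

def bseq (α β : ℝ) (n : ℕ) : ℕ := ceilDigit α β ((T α β)^[n] 1)

lemma branch_strictMono (hβ : 0 < β) (d : ℕ) : StrictMono (branch α β d) :=
  fun _ _ h => by unfold branch; gcongr

lemma image_branch_Ico (hβ : 0 < β) (d : ℕ) (s t : ℝ) :
    branch α β d '' Set.Ico s t = Set.Ico (branch α β d s) (branch α β d t) :=
  Set.image_affine_Ico hβ _ s t

lemma floorDigit_eq_iff {y : ℝ} (hy : 0 ≤ β * y + α) {d : ℕ} :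
    floorDigit α β y = d ↔ branch α β d y ∈ Set.Ico (0 : ℝ) 1 := by
  rw [floorDigit, Nat.floor_eq_iff hy, branch, Set.mem_Ico]
  constructor <;> rintro ⟨h₁, h₂⟩ <;> constructor <;> linarith

lemma branch_lt_one_iff {y : ℝ} (hy : 0 ≤ β * y + α) {d : ℕ} :
    branch α β d y < 1 ↔ floorDigit α β y ≤ d := by
  rw [floorDigit, ← Nat.lt_succ_iff, Nat.floor_lt hy, branch]
  push_cast
  constructor <;> intro h <;> linarith

lemma branch_neg_iff {y : ℝ} (hy : 0 ≤ β * y + α) {d : ℕ} :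
    branch α β d y < 0 ↔ floorDigit α β y < d := by
  rw [floorDigit, Nat.floor_lt hy, branch]
  constructor <;> intro h <;> linarith

lemma branch_pos_iff {y : ℝ} (hy : 0 < β * y + α) {d : ℕ} :
    0 < branch α β d y ↔ d ≤ ceilDigit α β y := by
  rw [ceilDigit, Nat.le_sub_one_iff_lt (Nat.ceil_pos.2 hy), Nat.lt_ceil, branch]
  constructor <;> intro h <;> linarith

lemma one_lt_branch_iff {y : ℝ} {d : ℕ} : 1 < branch α β d y ↔ d < ceilDigit α β y := by
  rw [ceilDigit, Nat.lt_sub_iff_add_lt, Nat.lt_ceil, branch]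
  push_cast
  constructor <;> intro h <;> linarith

lemma floorDigit_mono (hβ : 0 ≤ β) : Monotone (floorDigit α β) :=
  fun _ _ h => Nat.floor_mono (by gcongr)

lemma ceilDigit_mono (hβ : 0 ≤ β) : Monotone (ceilDigit α β) :=
  fun _ _ h => Nat.sub_le_sub_right (Nat.ceil_mono (by gcongr)) 1

lemma floorDigit_le_ceilDigit (hα : 0 ≤ α) (hβ : 0 < β) {x y : ℝ} (hx : 0 ≤ x) (hxy : x < y) :
    floorDigit α β x ≤ ceilDigit α β y := by
  have := Nat.floor_lt_ceil_of_lt_of_pos (a := β * x + α) (b := β * y + α) (by gcongr)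
    (by nlinarith)
  unfold floorDigit ceilDigit
  omega

lemma F_mem_Ico (y : ℝ) : F α β y ∈ Set.Ico (0 : ℝ) 1 :=
  ⟨Int.fract_nonneg _, Int.fract_lt_one _⟩

lemma iterate_F_mem_Ico {x : ℝ} (hx : x ∈ Set.Ico (0 : ℝ) 1) (n : ℕ) :
    (F α β)^[n] x ∈ Set.Ico (0 : ℝ) 1 := by
  cases n with
  | zero => exact hx
  | succ n => rw [Function.iterate_succ_apply']; exact F_mem_Ico _

lemma F_eq_branch {y : ℝ} (hy : 0 ≤ β * y + α) : F α β y = branch α β (floorDigit α β y) y := by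
  rw [F, Int.fract, branch, floorDigit, ← Int.natCast_floor_eq_floor hy]
  push_cast
  ring

lemma Om_eq_floorDigit (x : ℝ) (n : ℕ) : Om α β x n = floorDigit α β ((F α β)^[n] x) :=
  Int.floor_toNat _

lemma Om_add (x : ℝ) (m n : ℕ) : Om α β x (m + n) = Om α β ((F α β)^[m] x) n := by
  rw [Om_eq_floorDigit, Om_eq_floorDigit, add_comm, Function.iterate_add_apply]

lemma iterate_succ_F_eq_branch (hα : 0 ≤ α) (hβ : 0 < β) {x : ℝ} (hx : x ∈ Set.Ico (0 : ℝ) 1)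
    (n : ℕ) : (F α β)^[n + 1] x = branch α β (Om α β x n) ((F α β)^[n] x) := by
  have := (iterate_F_mem_Ico (α := α) (β := β) hx n).1
  rw [Function.iterate_succ_apply', Om_eq_floorDigit, F_eq_branch (by positivity)]

lemma T_mem_Ioc {y : ℝ} (hy : 0 < β * y + α) : T α β y ∈ Set.Ioc (0 : ℝ) 1 :=
  ⟨(branch_pos_iff hy).2 le_rfl, not_lt.1 (one_lt_branch_iff.not.2 (lt_irrefl _))⟩

lemma iterate_T_one_mem_Ioc (hα : 0 ≤ α) (hβ : 0 < β) (n : ℕ) :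
    (T α β)^[n] 1 ∈ Set.Ioc (0 : ℝ) 1 := by
  induction n with
  | zero => simp
  | succ n ih =>
    have := ih.1
    rw [Function.iterate_succ_apply']
    exact T_mem_Ioc (by positivity)

end Digits

section Cylinders

variable {α β : ℝ}

lemma pre_succ (s : ℕ → ℕ) (n : ℕ) : pre s (n + 1) = pre s n ++ [s n] := by
  rw [pre, List.ofFn_succ']
  simp [pre, List.concat_eq_append]

lemma pre_length (s : ℕ → ℕ) (n : ℕ) : (pre s n).length = n := List.length_ofFn

lemma pre_eq_pre_iff {x y : ℕ → ℕ} {n : ℕ} : pre x n = pre y n ↔ ∀ i < n, x i = y i := by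
  simp [pre, List.ofFn_inj, funext_iff, Fin.forall_iff]

def cylinder (α β : ℝ) (w : List ℕ) : Set ℝ :=
  {y ∈ Set.Ico (0 : ℝ) 1 | pre (Om α β y) w.length = w}

lemma cylinder_append_singleton (w : List ℕ) (d : ℕ) :
    cylinder α β (w ++ [d]) =
      cylinder α β w ∩ (F α β)^[w.length] ⁻¹' {y | floorDigit α β y = d} := by
  ext y
  simp [cylinder, pre_succ, Om_eq_floorDigit, and_assoc]

lemma image_F_inter_floorDigit (hα : 0 ≤ α) (hβ : 0 < β) {A : Set ℝ} (hA : A ⊆ Set.Ici 0)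
    (d : ℕ) : F α β '' (A ∩ {y | floorDigit α β y = d}) = branch α β d '' A ∩ Set.Ico 0 1 := by
  ext z
  simp only [Set.mem_image, Set.mem_inter_iff, Set.mem_ofPred_eq]
  constructor
  · rintro ⟨y, ⟨hyA, rfl⟩, rfl⟩
    have : 0 ≤ y := hA hyA
    exact ⟨⟨y, hyA, (F_eq_branch (by positivity)).symm⟩, F_mem_Ico y⟩
  · rintro ⟨⟨y, hyA, rfl⟩, hz⟩
    have : 0 ≤ y := hA hyA
    have hd := (floorDigit_eq_iff (by positivity)).2 hz
    exact ⟨y, ⟨hyA, hd⟩, by rw [F_eq_branch (by positivity), hd]⟩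

def lowerEnd (α β : ℝ) (w : List ℕ) : ℝ := w.foldl (fun s d => max (branch α β d s) 0) 0

def upperEnd (α β : ℝ) (w : List ℕ) : ℝ := w.foldl (fun t d => min (branch α β d t) 1) 1

lemma lowerEnd_append_singleton (w : List ℕ) (d : ℕ) :
    lowerEnd α β (w ++ [d]) = max (branch α β d (lowerEnd α β w)) 0 := by
  simp [lowerEnd]

lemma upperEnd_append_singleton (w : List ℕ) (d : ℕ) :
    upperEnd α β (w ++ [d]) = min (branch α β d (upperEnd α β w)) 1 := by
  simp [upperEnd]

lemma image_iterate_F_cylinder (hα : 0 ≤ α) (hβ : 0 < β) (w : List ℕ) :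
    (F α β)^[w.length] '' cylinder α β w = Set.Ico (lowerEnd α β w) (upperEnd α β w) := by
  induction w using List.reverseRecOn with
  | nil => simp [cylinder, pre, lowerEnd, upperEnd, Set.Ico_def]
  | append_singleton w d ih =>
    have hA : (F α β)^[w.length] '' cylinder α β w ⊆ Set.Ici 0 :=
      Set.image_subset_iff.2 fun y hy => (iterate_F_mem_Ico hy.1 _).1
    rw [List.length_append, List.length_singleton, Function.iterate_succ', Set.image_comp,
      cylinder_append_singleton, Set.image_inter_preimage, image_F_inter_floorDigit hα hβ hA, ih,
      image_branch_Ico hβ, Set.Ico_inter_Ico, lowerEnd_append_singleton,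
      upperEnd_append_singleton]

lemma cylinder_nonempty_iff (hα : 0 ≤ α) (hβ : 0 < β) {w : List ℕ} :
    (cylinder α β w).Nonempty ↔ lowerEnd α β w < upperEnd α β w := by
  rw [← Set.image_nonempty (f := (F α β)^[w.length]), image_iterate_F_cylinder hα hβ,
    Set.nonempty_Ico]

lemma mem_closure_iff_forall_pre {S : Set (ℕ → ℕ)} {z : ℕ → ℕ} :
    z ∈ closure S ↔ ∀ n, ∃ x ∈ S, pre x n = pre z n := by
  simp only [pre_eq_pre_iff, ← PiNat.mem_cylinder_iff]
  constructor
  · intro hz n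
    exact (closure_inter_open_nonempty_iff (PiNat.isOpen_cylinder _ z n)).1
      ⟨z, hz, PiNat.self_mem_cylinder z n⟩
  · intro h
    refine (PiNat.isTopologicalBasis_cylinders _).mem_closure_iff.2 ?_
    rintro _ ⟨x, n, rfl⟩ hz
    rw [← PiNat.mem_cylinder_iff_eq.1 hz]
    obtain ⟨y, hyS, hy⟩ := h n
    exact ⟨y, hy, hyS⟩

lemma mem_Sig_iff {z : ℕ → ℕ} :
    z ∈ Sig α β ↔ ∀ n, ∃ x ∈ Set.Ico (0 : ℝ) 1, pre (Om α β x) n = pre z n := by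
  simp only [Sig, mem_closure_iff_forall_pre, Set.exists_mem_image]

lemma langOf_iff (S : Set (ℕ → ℕ)) (w : List ℕ) :
    langOf S w ↔ ∃ x ∈ S, pre x w.length = w := by
  refine exists_congr fun x => and_congr_right fun _ => ?_
  rw [pre, List.ext_get_iff]
  simp [Fin.forall_iff]

lemma inLang_iff (hα : 0 ≤ α) (hβ : 0 < β) {w : List ℕ} :
    inLang α β w ↔ lowerEnd α β w < upperEnd α β w := by
  rw [← cylinder_nonempty_iff hα hβ, inLang, langOf_iff]
  constructor
  · rintro ⟨z, hz, hzw⟩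
    obtain ⟨x, hx, hxz⟩ := mem_Sig_iff.1 hz w.length
    exact ⟨x, hx, hxz.trans hzw⟩
  · rintro ⟨x, hx, hxw⟩
    exact ⟨Om α β x, subset_closure (Set.mem_image_of_mem _ hx), hxw⟩

end Cylinders

section Extremal

variable {α β : ℝ}

lemma iterate_F_le (hα : 0 ≤ α) (hβ : 0 < β) {x y : ℝ} (hx : x ∈ Set.Ico (0 : ℝ) 1)
    (hy : y ∈ Set.Ico (0 : ℝ) 1) (hxy : x ≤ y) (n : ℕ) (h : ∀ i < n, Om α β x i = Om α β y i) :
    (F α β)^[n] x ≤ (F α β)^[n] y := by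
  induction n with
  | zero => exact hxy
  | succ n ih =>
    rw [iterate_succ_F_eq_branch hα hβ hx, iterate_succ_F_eq_branch hα hβ hy, h n n.lt_succ_self]
    exact (branch_strictMono hβ _).monotone (ih fun i hi => h i (hi.trans n.lt_succ_self))

lemma Om_zero_le_add (hα : 0 ≤ α) (hβ : 0 < β) (m k : ℕ)
    (h : ∀ i < k, Om α β 0 i = Om α β 0 (m + i)) : Om α β 0 k ≤ Om α β 0 (m + k) := by
  have h₀ : (0 : ℝ) ∈ Set.Ico (0 : ℝ) 1 := Set.left_mem_Ico.2 one_pos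
  have hm := iterate_F_mem_Ico (α := α) (β := β) h₀ m
  rw [Om_add, Om_eq_floorDigit, Om_eq_floorDigit]
  exact floorDigit_mono hβ.le
    (iterate_F_le hα hβ h₀ hm hm.1 k fun i hi => (h i hi).trans (Om_add 0 m i))

lemma iterate_T_le (hβ : 0 < β) {x y : ℝ} (hxy : x ≤ y) (n : ℕ)
    (h : ∀ i < n, ceilDigit α β ((T α β)^[i] x) = ceilDigit α β ((T α β)^[i] y)) :
    (T α β)^[n] x ≤ (T α β)^[n] y := by
  induction n with
  | zero => exact hxy
  | succ n ih =>
    rw [Function.iterate_succ_apply', Function.iterate_succ_apply', T, T, h n n.lt_succ_self]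
    exact (branch_strictMono hβ _).monotone (ih fun i hi => h i (hi.trans n.lt_succ_self))

lemma bseq_add_le (hα : 0 ≤ α) (hβ : 0 < β) (m k : ℕ)
    (h : ∀ i < k, bseq α β i = bseq α β (m + i)) : bseq α β (m + k) ≤ bseq α β k := by
  have shift : ∀ i, bseq α β (m + i) = ceilDigit α β ((T α β)^[i] ((T α β)^[m] 1)) := fun i => by
    rw [bseq, add_comm, Function.iterate_add_apply]
  rw [shift]
  exact ceilDigit_mono hβ.le (iterate_T_le hβ (iterate_T_one_mem_Ioc hα hβ m).2 k
    fun i hi => ((h i hi).trans (shift i)).symm)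

lemma iterate_F_lt_iterate_T (hα : 0 ≤ α) (hβ : 0 < β) {x : ℝ} (hx : x ∈ Set.Ico (0 : ℝ) 1)
    (n : ℕ) (h : ∀ i < n, Om α β x i = bseq α β i) : (F α β)^[n] x < (T α β)^[n] 1 := by
  induction n with
  | zero => exact hx.2
  | succ n ih =>
    rw [iterate_succ_F_eq_branch hα hβ hx, Function.iterate_succ_apply', T, h n n.lt_succ_self]
    exact branch_strictMono hβ _ (ih fun i hi => h i (hi.trans n.lt_succ_self))

lemma Om_le_bseq (hα : 0 ≤ α) (hβ : 0 < β) {x : ℝ} (hx : x ∈ Set.Ico (0 : ℝ) 1) (n : ℕ)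
    (h : ∀ i < n, Om α β x i = bseq α β i) : Om α β x n ≤ bseq α β n := by
  rw [Om_eq_floorDigit]
  exact floorDigit_le_ceilDigit hα hβ (iterate_F_mem_Ico hx n).1
    (iterate_F_lt_iterate_T hα hβ hx n h)

lemma upperEnd_pre_bseq (hα : 0 ≤ α) (hβ : 0 < β) (n : ℕ) :
    upperEnd α β (pre (bseq α β) n) = (T α β)^[n] 1 := by
  induction n with
  | zero => rfl
  | succ n ih =>
    have hmem := iterate_T_one_mem_Ioc hα hβ (n + 1)
    rw [Function.iterate_succ_apply'] at hmem ⊢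
    rw [pre_succ, upperEnd_append_singleton, ih]
    exact min_eq_left hmem.2

lemma lowerEnd_lt_upperEnd_pre_bseq (hα : 0 ≤ α) (hβ : 0 < β) (n : ℕ) :
    lowerEnd α β (pre (bseq α β) n) < upperEnd α β (pre (bseq α β) n) := by
  induction n with
  | zero => simp [pre, lowerEnd, upperEnd]
  | succ n ih =>
    have hmem := iterate_T_one_mem_Ioc hα hβ (n + 1)
    rw [upperEnd_pre_bseq hα hβ] at ih ⊢
    rw [Function.iterate_succ_apply'] at hmem ⊢
    rw [pre_succ, lowerEnd_append_singleton]
    exact max_lt (branch_strictMono hβ _ ih) hmem.1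

lemma bseq_mem_Sig (hα : 0 ≤ α) (hβ : 0 < β) : bseq α β ∈ Sig α β := by
  refine mem_Sig_iff.2 fun n => ?_
  obtain ⟨x, hx, hxw⟩ := (cylinder_nonempty_iff hα hβ).2 (lowerEnd_lt_upperEnd_pre_bseq hα hβ n)
  rw [pre_length] at hxw
  exact ⟨x, hx, hxw⟩

lemma apply_le_bseq_of_mem_Sig (hα : 0 ≤ α) (hβ : 0 < β) {z : ℕ → ℕ} (hz : z ∈ Sig α β)
    (n : ℕ) (h : ∀ i < n, z i = bseq α β i) : z n ≤ bseq α β n := by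
  obtain ⟨x, hx, hxz⟩ := mem_Sig_iff.1 hz (n + 1)
  rw [pre_eq_pre_iff] at hxz
  rw [← hxz n n.lt_succ_self]
  exact Om_le_bseq hα hβ hx n fun i hi => (hxz i (hi.trans n.lt_succ_self)).trans (h i hi)

lemma apply_le_of_lexLe {x y : ℕ → ℕ} (h : lexLe x y) {j : ℕ} (hj : ∀ i < j, x i = y i) :
    x j ≤ y j := by
  rcases h with rfl | ⟨k, hk, hlt⟩
  · exact le_rfl
  rcases lt_trichotomy j k with hjk | rfl | hjk
  · exact (hk j hjk).le
  · exact hlt.le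
  · exact absurd (hj k hjk) hlt.ne

lemma eq_bseq_of_forall_lexLe (hα : 0 ≤ α) (hβ : 0 < β) {b : ℕ → ℕ} (hb : b ∈ Sig α β)
    (hbsup : ∀ y ∈ Sig α β, lexLe y b) : b = bseq α β := by
  funext n
  induction n using Nat.strong_induction_on with
  | _ n ih =>
    exact le_antisymm (apply_le_bseq_of_mem_Sig hα hβ hb n ih)
      (apply_le_of_lexLe (hbsup _ (bseq_mem_Sig hα hβ)) fun i hi => (ih i hi).symm)

end Extremal

section Kmax

variable {s : ℕ → ℕ} {w : List ℕ} {d k : ℕ}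

lemma tailAgrees_zero (s : ℕ → ℕ) (w : List ℕ) : tailAgrees s w 0 :=
  ⟨Nat.zero_le _, fun _ hi => absurd hi (Nat.not_lt_zero _)⟩

lemma tailAgrees_append_singleton_iff :
    tailAgrees s (w ++ [d]) (k + 1) ↔ tailAgrees s w k ∧ s k = d := by
  simp only [tailAgrees, List.length_append, List.length_singleton]
  constructor
  · rintro ⟨hk, h⟩
    refine ⟨⟨by omega, fun i hi => ?_⟩, ?_⟩
    · rw [← h i (by omega), List.getD_append _ _ _ _ (by omega)]
      congr 1
      omega
    · rw [← h k (by omega), List.getD_append_right _ _ _ _ (by omega)]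
      simp [show w.length - k + k - w.length = 0 by omega]
  · rintro ⟨⟨hk, h⟩, rfl⟩
    refine ⟨by omega, fun i hi => ?_⟩
    rcases Nat.lt_succ_iff_lt_or_eq.1 hi with hi | rfl
    · rw [List.getD_append _ _ _ _ (by omega), ← h i hi]
      congr 1
      omega
    · rw [List.getD_append_right _ _ _ _ (by omega)]
      simp [show w.length - i + i - w.length = 0 by omega]

lemma isGreatest_kmax (s : ℕ → ℕ) (w : List ℕ) :
    IsGreatest {k | tailAgrees s w k} (kmax s w) :=
  have hbdd : BddAbove {k | tailAgrees s w k} := ⟨w.length, fun _ hk => hk.1⟩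
  ⟨Nat.sSup_mem ⟨0, tailAgrees_zero s w⟩ hbdd, fun _ hk => le_csSup hbdd hk⟩

lemma kmax_nil (s : ℕ → ℕ) : kmax s [] = 0 :=
  IsGreatest.csSup_eq ⟨tailAgrees_zero s [], fun _ hk => Nat.le_zero.2 (by simpa using hk.1)⟩

lemma kmax_append_singleton_of_eq (h : s (kmax s w) = d) : kmax s (w ++ [d]) = kmax s w + 1 := by
  refine IsGreatest.csSup_eq
    ⟨tailAgrees_append_singleton_iff.2 ⟨(isGreatest_kmax s w).1, h⟩, ?_⟩
  rintro (_ | k) hk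
  · exact Nat.zero_le _
  · exact Nat.succ_le_succ ((isGreatest_kmax s w).2 (tailAgrees_append_singleton_iff.1 hk).1)

lemma exists_shift_of_tailAgrees_append_singleton (hk : tailAgrees s (w ++ [d]) (k + 1))
    (hne : s (kmax s w) ≠ d) :
    ∃ m, (∀ i < k, s i = s (m + i)) ∧ s (m + k) = s (kmax s w) ∧ s k = d := by
  obtain ⟨hkw, hd⟩ := tailAgrees_append_singleton_iff.1 hk
  obtain ⟨⟨hK, hKw⟩, hmax⟩ := isGreatest_kmax s w
  have hkK : k < kmax s w := lt_of_le_of_ne (hmax hkw) (by rintro rfl; exact hne hd)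
  refine ⟨kmax s w - k, fun i hi => ?_, by rw [Nat.sub_add_cancel hkK.le], hd⟩
  rw [← hkw.2 i hi, ← hKw (kmax s w - k + i) (by omega)]
  congr 1
  omega

lemma kmax_append_singleton_eq_zero_of_lt
    (hs : ∀ m k, (∀ i < k, s i = s (m + i)) → s k ≤ s (m + k)) (hd : s (kmax s w) < d) :
    kmax s (w ++ [d]) = 0 := by
  refine IsGreatest.csSup_eq ⟨tailAgrees_zero _ _, ?_⟩
  rintro (_ | k) hk
  · exact le_rfl
  · obtain ⟨m, hm, hmk, hkd⟩ := exists_shift_of_tailAgrees_append_singleton hk hd.ne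
    have := hs m k hm
    omega

lemma kmax_append_singleton_eq_zero_of_gt
    (hs : ∀ m k, (∀ i < k, s i = s (m + i)) → s (m + k) ≤ s k) (hd : d < s (kmax s w)) :
    kmax s (w ++ [d]) = 0 := by
  refine IsGreatest.csSup_eq ⟨tailAgrees_zero _ _, ?_⟩
  rintro (_ | k) hk
  · exact le_rfl
  · obtain ⟨m, hm, hmk, hkd⟩ := exists_shift_of_tailAgrees_append_singleton hk hd.ne'
    have := hs m k hm
    omega

end Kmax

section Endpoints

variable {α β : ℝ}

lemma lowerEnd_eq_iterate_F (hα : 0 ≤ α) (hβ : 0 < β) {w : List ℕ}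
    (h : lowerEnd α β w < upperEnd α β w) : lowerEnd α β w = (F α β)^[kmax (Om α β 0) w] 0 := by
  induction w using List.reverseRecOn with
  | nil => simp [lowerEnd, kmax_nil]
  | append_singleton w d ih =>
    rw [lowerEnd_append_singleton, upperEnd_append_singleton, max_lt_iff, lt_min_iff,
      lt_min_iff] at h
    have hlt := (branch_strictMono hβ d).lt_iff_lt.1 h.1.1
    rw [lowerEnd_append_singleton, ih hlt]
    rw [ih hlt] at h
    set K := kmax (Om α β 0) w
    have h₀ : (0 : ℝ) ∈ Set.Ico (0 : ℝ) 1 := Set.left_mem_Ico.2 one_pos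
    have hp := (iterate_F_mem_Ico (α := α) (β := β) h₀ K).1
    have hnn : 0 ≤ β * (F α β)^[K] 0 + α := by positivity
    have ha : Om α β 0 K ≤ d := by
      rw [Om_eq_floorDigit]
      exact (branch_lt_one_iff hnn).1 h.1.2
    rcases ha.eq_or_lt with ha | ha
    · subst ha
      rw [kmax_append_singleton_of_eq rfl, ← iterate_succ_F_eq_branch hα hβ h₀,
        max_eq_left (iterate_F_mem_Ico h₀ _).1]
    · rw [kmax_append_singleton_eq_zero_of_lt (Om_zero_le_add hα hβ) ha, max_eq_right]
      · rfl
      · rw [Om_eq_floorDigit] at ha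
        exact ((branch_neg_iff hnn).2 ha).le

lemma upperEnd_eq_iterate_T (hα : 0 ≤ α) (hβ : 0 < β) {w : List ℕ}
    (h : lowerEnd α β w < upperEnd α β w) : upperEnd α β w = (T α β)^[kmax (bseq α β) w] 1 := by
  induction w using List.reverseRecOn with
  | nil => simp [upperEnd, kmax_nil]
  | append_singleton w d ih =>
    rw [lowerEnd_append_singleton, upperEnd_append_singleton, max_lt_iff, lt_min_iff,
      lt_min_iff] at h
    have hlt := (branch_strictMono hβ d).lt_iff_lt.1 h.1.1
    rw [upperEnd_append_singleton, ih hlt]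
    rw [ih hlt] at h
    set K := kmax (bseq α β) w
    have hq := (iterate_T_one_mem_Ioc hα hβ K).1
    have hpos : 0 < β * (T α β)^[K] 1 + α := by positivity
    have hb : d ≤ bseq α β K := (branch_pos_iff hpos).1 h.2.1
    rcases hb.eq_or_lt with hb | hb
    · subst hb
      rw [kmax_append_singleton_of_eq rfl, Function.iterate_succ_apply']
      exact min_eq_left (T_mem_Ioc hpos).2
    · rw [kmax_append_singleton_eq_zero_of_gt (bseq_add_le hα hβ) hb,
        min_eq_right (one_lt_branch_iff.2 hb).le]
      rfl

end Endpoints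

theorem append_letter_mem_lang_iff_general (α β : ℝ) (hα0 : 0 ≤ α) (hβ : 1 < β)
    (b : ℕ → ℕ) (hb : b ∈ Sig α β) (hbsup : ∀ y ∈ Sig α β, lexLe y b)
    (w : List ℕ) (hw : inLang α β w) (c : ℕ) :
    inLang α β (w ++ [c]) ↔
      (Om α β 0) (kmax (Om α β 0) w) ≤ c ∧ c ≤ b (kmax b w) := by
  have hβ0 : 0 < β := zero_lt_one.trans hβ
  obtain rfl := eq_bseq_of_forall_lexLe hα0 hβ0 hb hbsup
  rw [inLang_iff hα0 hβ0] at hw ⊢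
  have hs := lowerEnd_eq_iterate_F hα0 hβ0 hw
  have ht := upperEnd_eq_iterate_T hα0 hβ0 hw
  have hp := (iterate_F_mem_Ico (α := α) (β := β) (Set.left_mem_Ico.2 one_pos)
    (kmax (Om α β 0) w)).1
  have hq := (iterate_T_one_mem_Ioc hα0 hβ0 (kmax (bseq α β) w)).1
  have hst := branch_strictMono (α := α) hβ0 c (hs ▸ ht ▸ hw)
  rw [lowerEnd_append_singleton, upperEnd_append_singleton, hs, ht, Om_eq_floorDigit, bseq,
    ← branch_lt_one_iff (by positivity), ← branch_pos_iff (by positivity)]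
  simp only [max_lt_iff, lt_min_iff, hst, zero_lt_one, true_and, and_comm]

/-- **Extension of words by one letter.** For `0 ≤ α < 1` and `β > 1`, a word
`w ∈ 𝓛` followed by a letter `c ∈ {0,…,ℓ}` is again in `𝓛` if and only if
`a_{k₁(w)+1} ≤ c ≤ b_{k₂(w)+1}`. -/
theorem append_letter_mem_lang_iff (α β : ℝ) (hα0 : 0 ≤ α) (hα1 : α < 1) (hβ : 1 < β)
    (b : ℕ → ℕ) (hb : b ∈ Sig α β) (hbsup : ∀ y ∈ Sig α β, lexLe y b)
    (w : List ℕ) (hw : inLang α β w) (c : ℕ) (hc : c ≤ ell α β) :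
    inLang α β (w ++ [c]) ↔
      (Om α β 0) (kmax (Om α β 0) w) ≤ c ∧ c ≤ b (kmax b w) :=
  append_letter_mem_lang_iff_general α β hα0 hβ b hb hbsup w hw c

end IntermediateBeta
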